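/- Let λ > 0 and k be a positive integer. Then ∫_ℝ l · (1/Γ(k)) λ^k (exp(l))^k exp(−λ exp(l)) dl = ψ(k) − log λ, where ψ is the digamma function ψ(z) = Γ'(z)/Γ(z). Equivalently, if U is an Erlang(k, λ) random variable, then E[log U] = ψ(k) − log λ. -/

import Mathlib

/-!
Substituting `x = λ eˡ` turns the integral into `(1/Γ(k)) ∫₀^∞ (log x - log λ) x^(k-1) e^(-x) dx`.
Differentiating Euler's integral under the integral sign shows
`Γ'(s) = ∫₀^∞ x^(s-1) log x e^(-x) dx`, so this equals `Γ'(k)/Γ(k) - log λ`.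
-/

open MeasureTheory Set Real Filter Asymptotics

/-- The digamma function `ψ = Γ'/Γ`. -/
noncomputable def digamma (z : ℝ) : ℝ := deriv Real.Gamma z / Real.Gamma z

namespace Real

theorem integrableOn_rpow_mul_log_mul_exp_neg {s : ℝ} (hs : 0 < s) :
    IntegrableOn (fun t : ℝ => t ^ (s - 1) * (log t * exp (-t))) (Ioi 0) := by
  refine mellin_convergent_of_isBigO_scalar (a := s + 1) (b := s / 2) ?_ ?_ (lt_add_one s) ?_
    (half_lt_self hs)
  · exact ((continuousOn_log.mono fun t ht => ne_of_gt ht).mul (by fun_prop)).locallyIntegrableOn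
      measurableSet_Ioi
  · refine isBigO_rpow_top_log_smul (lt_add_one _) ?_
    simpa only [neg_one_mul] using (isLittleO_exp_neg_mul_rpow_atTop zero_lt_one _).isBigO
  · refine isBigO_rpow_zero_log_smul (half_pos hs) ?_
    simp_rw [neg_zero, rpow_zero]
    exact ((continuous_exp.comp continuous_neg).tendsto 0).mono_left nhdsWithin_le_nhds
      |>.isBigO_one ℝ

theorem hasDerivAt_Gamma_of_pos {s : ℝ} (hs : 0 < s) :
    HasDerivAt Gamma (∫ t in Ioi 0, t ^ (s - 1) * (log t * exp (-t))) s := by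
  have hs' : 0 < (s : ℂ).re := by simpa using hs
  have hGamma : HasDerivAt Complex.Gamma
      (∫ t : ℝ in Ioi 0, (t : ℂ) ^ ((s : ℂ) - 1) * (log t * exp (-t))) s := by
    refine (Complex.hasDerivAt_GammaIntegral hs').congr_of_eventuallyEq ?_
    filter_upwards [(Complex.continuous_re.isOpen_preimage _ isOpen_Ioi).mem_nhds hs'] with z hz
      using Complex.Gamma_eq_integral hz
  have hofReal : (∫ t : ℝ in Ioi 0, (t : ℂ) ^ ((s : ℂ) - 1) * (log t * exp (-t)))
      = ((∫ t in Ioi 0, t ^ (s - 1) * (log t * exp (-t)) : ℝ) : ℂ) := by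
    rw [← integral_complex_ofReal]
    refine setIntegral_congr_fun measurableSet_Ioi fun t ht => ?_
    rw [Complex.ofReal_mul, Complex.ofReal_cpow (le_of_lt ht)]
    push_cast
    rfl
  simpa only [hofReal, Complex.ofReal_re, Complex.Gamma_ofReal] using hGamma.real_of_complex

theorem integral_exp_smul_comp_exp {E : Type*} [NormedAddCommGroup E] [NormedSpace ℝ E]
    (g : ℝ → E) : ∫ l, exp l • g (exp l) = ∫ x in Ioi 0, g x := by
  have h := integral_image_eq_integral_abs_deriv_smul MeasurableSet.univ
    (fun l _ => (hasDerivAt_exp l).hasDerivWithinAt) exp_injective.injOn g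
  simpa only [image_univ, range_exp, setIntegral_univ, abs_of_pos (exp_pos _)] using h.symm

theorem integral_mul_exp_smul_comp_mul_exp {E : Type*} [NormedAddCommGroup E] [NormedSpace ℝ E]
    {c : ℝ} (hc : 0 < c) (g : ℝ → E) :
    ∫ l, (c * exp l) • g (c * exp l) = ∫ x in Ioi 0, g x := by
  have hshift (l : ℝ) : c * exp l = exp (l + log c) := by rw [exp_add, exp_log hc, mul_comm]
  simp_rw [hshift]
  exact (integral_add_right_eq_self (fun l => exp l • g (exp l)) (log c)).trans
    (integral_exp_smul_comp_exp g)

end Real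

/-- The density of `log U` for `U ~ Gamma(s, lam)`; for `s = k ∈ ℕ` the log-Erlang density. -/
noncomputable def logGammaPDFReal (s lam l : ℝ) : ℝ :=
  (1 / Gamma s) * lam ^ s * exp l ^ s * exp (-lam * exp l)

theorem integral_id_mul_logGammaPDFReal {s lam : ℝ} (hs : 0 < s) (hlam : 0 < lam) :
    ∫ l, l * logGammaPDFReal s lam l = digamma s - log lam := by
  set g : ℝ → ℝ := fun x => (x ^ (s - 1) * (log x * exp (-x)) - log lam * (exp (-x) * x ^ (s - 1)))
    / Gamma s
  have hsubst (l : ℝ) : l * logGammaPDFReal s lam l = (lam * exp l) • g (lam * exp l) := by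
    have hx : 0 < lam * exp l := by positivity
    simp only [g, logGammaPDFReal, smul_eq_mul, log_mul hlam.ne' (exp_ne_zero l), log_exp,
      rpow_sub_one hx.ne', mul_rpow hlam.le (exp_pos l).le]
    field_simp
    ring
  calc ∫ l, l * logGammaPDFReal s lam l
      = ∫ x in Ioi 0, g x := by
        simp_rw [hsubst]
        exact integral_mul_exp_smul_comp_mul_exp hlam g
    _ = (deriv Gamma s - log lam * Gamma s) / Gamma s := by
        rw [integral_div, integral_sub (integrableOn_rpow_mul_log_mul_exp_neg hs)
          ((GammaIntegral_convergent hs).const_mul _), integral_const_mul,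
          ← (hasDerivAt_Gamma_of_pos hs).deriv, Gamma_eq_integral hs]
    _ = digamma s - log lam := by
        rw [digamma]
        field_simp [(Gamma_pos_of_pos hs).ne']

/-- The mean of the log-Erlang distribution: if `U ~ Erlang(k, λ)` then
`E[log U] = ∫ l · (1/Γ(k)) λ^k (exp l)^k exp(-λ exp l) dl = ψ(k) - log λ`. -/
theorem stmt8 (lam : ℝ) (hlam : 0 < lam) (k : ℕ) (hk : 0 < k) :
    (∫ l : ℝ, l * ((1 / Real.Gamma k) * lam ^ k * Real.exp l ^ k *
        Real.exp (-lam * Real.exp l)))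
      = digamma k - Real.log lam := by
  simpa only [logGammaPDFReal, rpow_natCast] using
    integral_id_mul_logGammaPDFReal (s := k) (Nat.cast_pos.2 hk) hlam
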